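/- arXiv:0712.0869 — 4 statements merged into one kernel-verified Lean document; each statement's English description precedes it below -/
import Mathlib

section
/- If A and B are complex n×n matrices such that the n×2n block matrix (A, B) has rank n and AB† is Hermitian (AB† = BA†), then for every real γ > 0 the matrix A - iγB is invertible. -/
/-!
If `v (A - c B) = 0`, put `a = v A` and `b = v B`, so `a = c b`. Hermiticity of `A Bᴴ` gives
`a ⬝ b̄ = b ⬝ ā`, that is `c ‖b‖² = c̄ ‖b‖²`; since `c = iγ` is not real, `b = 0`, hence `a = 0`.
So `v` annihilates the rows of `(A, B)`, which are independent because that matrix has rank `n`.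
-/

open Matrix

namespace Matrix

variable {m n n₁ n₂ K : Type*} [Fintype m] [Fintype n] [Fintype n₁] [Fintype n₂] [Field K]

theorem linearIndependent_row_of_rank_eq_card {M : Matrix m n K}
    (h : M.rank = Fintype.card m) : LinearIndependent K M.row := by
  rw [linearIndependent_iff_card_eq_finrank_span, ← h, M.rank_eq_finrank_span_row]
  rfl

theorem eq_zero_of_vecMul_fromCols_eq_zero {A : Matrix m n₁ K} {B : Matrix m n₂ K}
    (hrank : (fromCols A B).rank = Fintype.card m) {v : m → K}
    (hA : v ᵥ* A = 0) (hB : v ᵥ* B = 0) : v = 0 := by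
  refine vecMul_injective_iff.mpr (linearIndependent_row_of_rank_eq_card hrank) ?_
  change v ᵥ* fromCols A B = 0 ᵥ* fromCols A B
  rw [vecMul_fromCols, hA, hB, zero_vecMul]
  ext (_ | _) <;> rfl

theorem vecMul_dotProduct_star_comm {R : Type*} [CommRing R] [StarRing R]
    {A B : Matrix m n R} (hAB : A * Bᴴ = B * Aᴴ) (v : m → R) :
    (v ᵥ* A) ⬝ᵥ star (v ᵥ* B) = (v ᵥ* B) ⬝ᵥ star (v ᵥ* A) := by
  rw [star_vecMul, star_vecMul, dotProduct_mulVec, dotProduct_mulVec, vecMul_vecMul,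
    vecMul_vecMul, hAB]

end Matrix

theorem eq_zero_of_smul_dotProduct_star_comm {ι K : Type*} [Fintype ι] [Field K] [StarRing K]
    [PartialOrder K] [StarOrderedRing K] {c : K} (hc : star c ≠ c) {b : ι → K}
    (h : (c • b) ⬝ᵥ star b = b ⬝ᵥ star (c • b)) : b = 0 := by
  rw [smul_dotProduct, star_smul, dotProduct_smul, smul_eq_mul, smul_eq_mul] at h
  have : b ⬝ᵥ star b = 0 := by
    by_contra hb
    exact hc (mul_right_cancel₀ hb h).symm
  exact dotProduct_self_star_eq_zero.mp this

namespace Matrix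

variable {m K : Type*} [Fintype m] [DecidableEq m] [Field K] [StarRing K] [PartialOrder K]
  [StarOrderedRing K]

theorem isUnit_sub_smul_of_mul_conjTranspose_comm {A B : Matrix m m K}
    (hrank : (fromCols A B).rank = Fintype.card m) (hAB : A * Bᴴ = B * Aᴴ) {c : K}
    (hc : star c ≠ c) : IsUnit (A - c • B) := by
  rw [isUnit_iff_isUnit_det, isUnit_iff_ne_zero, ← separatingLeft_iff_det_ne_zero,
    separatingLeft_iff_forall_vecMul_eq_zero]
  intro v hv
  have hA : v ᵥ* A = c • (v ᵥ* B) := by rwa [vecMul_sub, vecMul_smul, sub_eq_zero] at hv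
  have hB : v ᵥ* B = 0 :=
    eq_zero_of_smul_dotProduct_star_comm hc (hA ▸ vecMul_dotProduct_star_comm hAB v)
  exact eq_zero_of_vecMul_fromCols_eq_zero hrank (by rw [hA, hB, smul_zero]) hB

end Matrix

/-- If `(A, B)` has rank `n` and `A Bᴴ` is Hermitian, then for every real `γ > 0`
the matrix `A - iγB` is invertible. -/
theorem transition_matrix_invertible (n : ℕ) (A B : Matrix (Fin n) (Fin n) ℂ)
    (hrank : (Matrix.fromCols A B).rank = n)
    (hherm : A * Bᴴ = B * Aᴴ)
    (γ : ℝ) (hγ : 0 < γ) :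
    IsUnit (A - ((γ : ℂ) * Complex.I) • B) := by
  have hγI : star ((γ : ℂ) * Complex.I) ≠ (γ : ℂ) * Complex.I := by
    rw [Complex.star_def, Ne, Complex.conj_eq_iff_im]
    simpa using hγ.ne'
  open scoped ComplexOrder in
  exact isUnit_sub_smul_of_mul_conjTranspose_comm (by simpa using hrank) hherm hγI
end

section
/- Let A, B be complex n×n matrices with rank(A, B) = n and AB† = BA†, and let γ > 0 be real. Then the transition matrix T = -(A - iγB)⁻¹(A + iγB) is unitary. -/
open Matrix

/-!
Put `M = A - iγB` and `N = A + iγB`. Since `ABᴴ` is Hermitian, `MMᴴ = NNᴴ` (both equal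
`AAᴴ + γ²BBᴴ`), so `T = -M⁻¹N` satisfies `TTᴴ = M⁻¹NNᴴM⁻ᴴ = M⁻¹MMᴴM⁻ᴴ = 1` as soon as `M` is
invertible. Invertibility is where the rank condition enters: `(M, N)` is `(A, B)` times an
invertible block matrix, and `rank (M, N) = rank ((M, N)(M, N)ᴴ) = rank (2MMᴴ) = rank M`.
-/

namespace Matrix

variable {m n : Type*}

theorem isUnit_of_rank_eq_card {K : Type*} [Field K] [Fintype m] [DecidableEq m]
    {M : Matrix m m K} (h : M.rank = Fintype.card m) : IsUnit M := by
  refine mulVec_surjective_iff_isUnit.mp ((LinearMap.range_eq_top (f := M.mulVecLin)).mp ?_)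
  exact Submodule.eq_top_of_finrank_eq (by rw [← rank, h, Module.finrank_fintype_fun_eq_card])

theorem sub_smul_mul_conjTranspose_eq_add_smul_mul_conjTranspose {R : Type*} [CommRing R]
    [StarRing R] [Fintype n] {A B : Matrix m n R} (hAB : A * Bᴴ = B * Aᴴ) {c : R}
    (hc : star c = -c) :
    (A - c • B) * (A - c • B)ᴴ = (A + c • B) * (A + c • B)ᴴ := by
  simp only [conjTranspose_sub, conjTranspose_add, conjTranspose_smul, hc, Matrix.sub_mul,
    Matrix.add_mul, Matrix.mul_sub, Matrix.mul_add, Matrix.smul_mul, Matrix.mul_smul, hAB]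
  module

theorem rank_fromCols_sub_smul_add_smul {K : Type*} [Field K] [NeZero (2 : K)] [Fintype n]
    [DecidableEq n] (A B : Matrix m n K) {c : K} (hc : c ≠ 0) :
    (fromCols (A - c • B) (A + c • B)).rank = (fromCols A B).rank := by
  have hdet : IsUnit (fromBlocks 1 1 (-c • 1) (c • 1) : Matrix (n ⊕ n) (n ⊕ n) K).det := by
    rw [det_fromBlocks_one₁₁, Matrix.mul_one, neg_smul, sub_neg_eq_add, ← add_smul, det_smul,
      det_one, mul_one, ← two_mul, isUnit_iff_ne_zero]
    exact pow_ne_zero _ (mul_ne_zero two_ne_zero hc)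
  rw [← rank_mul_eq_left_of_isUnit_det _ (fromCols A B) hdet, fromCols_mul_fromBlocks]
  congr 2 <;> simp [sub_eq_add_neg]

theorem rank_fromCols_eq_rank_of_mul_conjTranspose_eq {K : Type*} [Field K] [PartialOrder K]
    [StarRing K] [StarOrderedRing K] [NeZero (2 : K)] [Fintype m] [Fintype n]
    {M N : Matrix m n K} (h : M * Mᴴ = N * Nᴴ) :
    (fromCols M N).rank = M.rank :=
  calc (fromCols M N).rank = (fromCols M N * (fromCols M N)ᴴ).rank :=
        (rank_self_mul_conjTranspose _).symm
    _ = ((2 : K) • (M * Mᴴ)).rank := by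
        rw [conjTranspose_fromCols_eq_fromRows_conjTranspose, fromCols_mul_fromRows, ← h, two_smul]
    _ = M.rank := by
        rw [rank_smul_of_mem_nonZeroDivisors _ (mem_nonZeroDivisors_of_ne_zero two_ne_zero),
          rank_self_mul_conjTranspose]

theorem inv_mul_mem_unitaryGroup_of_mul_conjTranspose_eq {R : Type*} [CommRing R] [StarRing R]
    [Fintype m] [DecidableEq m] {M N : Matrix m m R} (hM : IsUnit M.det)
    (h : M * Mᴴ = N * Nᴴ) :
    M⁻¹ * N ∈ unitaryGroup m R := by
  have hMH : IsUnit Mᴴ.det := by rwa [det_conjTranspose, isUnit_star]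
  rw [mem_unitaryGroup_iff, star_eq_conjTranspose, conjTranspose_mul, conjTranspose_nonsing_inv,
    Matrix.mul_assoc, ← Matrix.mul_assoc N, ← h, Matrix.mul_assoc M, mul_nonsing_inv _ hMH,
    Matrix.mul_one, nonsing_inv_mul _ hM]

end Matrix

/-- The vertex transition matrix `T = -(A - iγB)⁻¹(A + iγB)` is unitary when
`(A,B)` has rank `n`, `ABᴴ = BAᴴ` and `γ > 0`. -/
theorem transition_matrix_unitary (n : ℕ) (A B : Matrix (Fin n) (Fin n) ℂ)
    (hrank : (Matrix.fromCols A B).rank = n)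
    (hherm : A * Bᴴ = B * Aᴴ)
    (γ : ℝ) (hγ : 0 < γ) :
    -((A - ((γ : ℂ) * Complex.I) • B)⁻¹ * (A + ((γ : ℂ) * Complex.I) • B)) ∈
      Matrix.unitaryGroup (Fin n) ℂ := by
  have hc : star ((γ : ℂ) * Complex.I) = -((γ : ℂ) * Complex.I) := by simp
  have hc0 : (γ : ℂ) * Complex.I ≠ 0 := mul_ne_zero (by exact_mod_cast hγ.ne') Complex.I_ne_zero
  have hMN := sub_smul_mul_conjTranspose_eq_add_smul_mul_conjTranspose hherm hc
  have hM : IsUnit (A - ((γ : ℂ) * Complex.I) • B).det := by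
    rw [← isUnit_iff_isUnit_det]
    refine isUnit_of_rank_eq_card ?_
    open ComplexOrder in
    rw [← rank_fromCols_eq_rank_of_mul_conjTranspose_eq hMN,
      rank_fromCols_sub_smul_add_smul _ _ hc0, hrank, Fintype.card_fin]
  rw [mem_unitaryGroup_iff, star_neg, neg_mul_neg, ← mem_unitaryGroup_iff]
  exact inv_mul_mem_unitaryGroup_of_mul_conjTranspose_eq hM hMN
end

section
/- For the normalized Haar measure on SU(2), ∫_{SU(2)} ∫_{SU(2)} tr(ab) · tr(ab⁻¹) da db = -1/2. -/
open Matrix MeasureTheory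

noncomputable instance : MeasurableSpace ↥(Matrix.specialUnitaryGroup (Fin 2) ℂ) := borel _
instance : BorelSpace ↥(Matrix.specialUnitaryGroup (Fin 2) ℂ) := ⟨rfl⟩

namespace SU2Aux

abbrev G := ↥(Matrix.specialUnitaryGroup (Fin 2) ℂ)
abbrev M := Matrix (Fin 2) (Fin 2) ℂ

lemma star_mul_self' (b : G) : star (b : M) * (b : M) = 1 :=
  Unitary.star_mul_self_of_mem (Submonoid.mem_inf.mp b.2).1

lemma det_coe (b : G) : (b : M).det = 1 := by
  have := (Submonoid.mem_inf.mp b.2).2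
  rw [MonoidHom.mem_mker] at this
  simpa using this

lemma inv_coe (b : G) : ((b : M))⁻¹ = star (b : M) :=
  Matrix.inv_eq_left_inv (star_mul_self' b)

noncomputable def ginv (g : G) : G :=
  ⟨star (g : M), by
    refine Matrix.mem_specialUnitaryGroup_iff.mpr
      ⟨Unitary.star_mem (Submonoid.mem_inf.mp g.2).1, ?_⟩
    rw [Matrix.star_eq_conjTranspose, Matrix.det_conjTranspose, det_coe]; simp⟩

lemma ginv_mul (g : G) : ginv g * g = 1 :=
  Subtype.ext (star_mul_self' g)

lemma mul_ginv (g : G) : g * ginv g = 1 :=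
  Subtype.ext (Unitary.mul_star_self_of_mem (Submonoid.mem_inf.mp g.2).1)

noncomputable def mulL (g : G) : G ≃ₜ G where
  toFun u := g * u
  invFun u := ginv g * u
  left_inv u := by show ginv g * (g * u) = u; rw [← mul_assoc, ginv_mul, one_mul]
  right_inv u := by show g * (ginv g * u) = u; rw [← mul_assoc, mul_ginv, one_mul]
  continuous_toFun := continuous_const.mul continuous_id
  continuous_invFun := continuous_const.mul continuous_id

lemma key (μ : Measure G)
    (hinv : ∀ (g : G) (s : Set G), MeasurableSet s → μ ((fun u => g * u) ⁻¹' s) = μ s)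
    (g : G) (f : G → ℂ) : ∫ b, f (g * b) ∂μ = ∫ b, f b ∂μ := by
  have hmap : μ.map ((mulL g).toMeasurableEquiv) = μ := by
    ext s hs
    rw [MeasurableEquiv.map_apply ((mulL g).toMeasurableEquiv)]
    exact hinv g _ hs
  calc ∫ b, f (g * b) ∂μ = ∫ b, f ((mulL g).toMeasurableEquiv b) ∂μ := rfl
    _ = ∫ b, f b ∂(μ.map (mulL g).toMeasurableEquiv) := (MeasureTheory.integral_map_equiv _ _).symm
    _ = ∫ b, f b ∂μ := by rw [hmap]

noncomputable def g1 : G :=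
  ⟨!![Complex.I, 0; 0, -Complex.I], by
    refine Matrix.mem_specialUnitaryGroup_iff.mpr ⟨Matrix.mem_unitaryGroup_iff.mpr ?_, ?_⟩
    · ext i j
      fin_cases i <;> fin_cases j <;>
        simp [Matrix.mul_apply, Fin.sum_univ_two, Matrix.star_apply, Complex.ext_iff]
    · simp [Matrix.det_fin_two, Complex.ext_iff]⟩

def g2 : G :=
  ⟨!![0, 1; -1, 0], by
    refine Matrix.mem_specialUnitaryGroup_iff.mpr ⟨Matrix.mem_unitaryGroup_iff.mpr ?_, ?_⟩
    · ext i j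
      fin_cases i <;> fin_cases j <;>
        simp [Matrix.mul_apply, Fin.sum_univ_two, Matrix.star_apply, Complex.ext_iff]
    · simp [Matrix.det_fin_two]⟩

lemma entry_bound (b : G) (i j : Fin 2) : ‖(b : M) i j‖ ≤ 1 := by
  set B := (b : M) with hB
  have h : (star B * B) j j = 1 := by rw [star_mul_self' b]; simp [Matrix.one_apply]
  rw [Matrix.mul_apply] at h
  simp only [Fin.sum_univ_two, Matrix.star_apply, Complex.star_def] at h
  have h' : (Complex.normSq (B 0 j) : ℂ) + (Complex.normSq (B 1 j) : ℂ) = 1 := by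
    rw [← Complex.normSq_eq_conj_mul_self, ← Complex.normSq_eq_conj_mul_self] at h
    exact h
  have hre : Complex.normSq (B 0 j) + Complex.normSq (B 1 j) = 1 := by exact_mod_cast h'
  have hi : i = 0 ∨ i = 1 := by omega
  have hb : Complex.normSq (B i j) ≤ 1 := by
    rcases hi with rfl | rfl <;>
      nlinarith [Complex.normSq_nonneg (B 0 j), Complex.normSq_nonneg (B 1 j)]
  have h2 : ‖B i j‖ ^ 2 ≤ 1 := by rw [← Complex.normSq_eq_norm_sq]; exact hb
  nlinarith [norm_nonneg (B i j)]

lemma cont_ent (i j : Fin 2) : Continuous (fun b : G => (b : M) i j) := by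
  exact (continuous_apply j).comp ((continuous_apply i).comp continuous_subtype_val)

lemma int_bdd (μ : Measure G) [IsProbabilityMeasure μ] {f : G → ℂ}
    (hf : Continuous f) (h : ∀ b, ‖f b‖ ≤ 1) : Integrable f μ :=
  Integrable.mono' (integrable_const (1 : ℝ)) hf.aestronglyMeasurable (ae_of_all _ h)

lemma int_pair (μ : Measure G) [IsProbabilityMeasure μ] (p q r s : Fin 2) :
    Integrable (fun b : G => (b : M) p q * (starRingEnd ℂ) ((b : M) r s)) μ := by
  apply int_bdd
  · exact (cont_ent p q).mul (Complex.continuous_conj.comp (cont_ent r s))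
  · intro b
    rw [norm_mul, RCLike.norm_conj]
    exact mul_le_one₀ (entry_bound b p q) (norm_nonneg _) (entry_bound b r s)

lemma int_pair2 (μ : Measure G) [IsProbabilityMeasure μ] (p q r s : Fin 2) :
    Integrable (fun a : G => (a : M) p q * (a : M) r s) μ := by
  apply int_bdd
  · exact (cont_ent p q).mul (cont_ent r s)
  · intro b
    rw [norm_mul]
    exact mul_le_one₀ (entry_bound b p q) (norm_nonneg _) (entry_bound b r s)

/-- Orthogonality of matrix entries. -/
lemma hD (μ : Measure G) [IsProbabilityMeasure μ]
    (hinv : ∀ (g : G) (s : Set G), MeasurableSet s → μ ((fun u => g * u) ⁻¹' s) = μ s)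
    (p q r s : Fin 2) :
    ∫ b, (b : M) p q * (starRingEnd ℂ) ((b : M) r s) ∂μ
      = (if p = r then 1 else 0) * (if q = s then 1 else 0) / 2 := by
  have h01 : ∀ q s : Fin 2, ∫ b, (b : M) 0 q * (starRingEnd ℂ) ((b : M) 1 s) ∂μ = 0 := by
    intro q s
    have hk := key μ hinv g1 (fun u => (u : M) 0 q * (starRingEnd ℂ) ((u : M) 1 s))
    have hpt : ∀ b : G, ((g1 * b : G) : M) 0 q * (starRingEnd ℂ) (((g1 * b : G) : M) 1 s)
        = -((b : M) 0 q * (starRingEnd ℂ) ((b : M) 1 s)) := by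
      intro b
      show ((g1 : M) * (b : M)) 0 q * (starRingEnd ℂ) (((g1 : M) * (b : M)) 1 s) = _
      simp [g1, Matrix.mul_apply, Fin.sum_univ_two, _root_.map_mul, map_neg, Complex.conj_I]
      ring_nf
      all_goals simp [Complex.I_sq]
      all_goals ring
    simp only [hpt, integral_neg] at hk
    linear_combination (-1/2 : ℂ) * hk
  have h10 : ∀ q s : Fin 2, ∫ b, (b : M) 1 q * (starRingEnd ℂ) ((b : M) 0 s) ∂μ = 0 := by
    intro q s
    have hk := key μ hinv g1 (fun u => (u : M) 1 q * (starRingEnd ℂ) ((u : M) 0 s))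
    have hpt : ∀ b : G, ((g1 * b : G) : M) 1 q * (starRingEnd ℂ) (((g1 * b : G) : M) 0 s)
        = -((b : M) 1 q * (starRingEnd ℂ) ((b : M) 0 s)) := by
      intro b
      show ((g1 : M) * (b : M)) 1 q * (starRingEnd ℂ) (((g1 : M) * (b : M)) 0 s) = _
      simp [g1, Matrix.mul_apply, Fin.sum_univ_two, _root_.map_mul, map_neg, Complex.conj_I]
      ring_nf
      all_goals simp [Complex.I_sq]
      all_goals ring
    simp only [hpt, integral_neg] at hk
    linear_combination (-1/2 : ℂ) * hk
  have heq : ∀ q s : Fin 2, ∫ b, (b : M) 1 q * (starRingEnd ℂ) ((b : M) 1 s) ∂μ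
      = ∫ b, (b : M) 0 q * (starRingEnd ℂ) ((b : M) 0 s) ∂μ := by
    intro q s
    have hk := key μ hinv g2 (fun u => (u : M) 0 q * (starRingEnd ℂ) ((u : M) 0 s))
    have hpt : ∀ b : G, ((g2 * b : G) : M) 0 q * (starRingEnd ℂ) (((g2 * b : G) : M) 0 s)
        = (b : M) 1 q * (starRingEnd ℂ) ((b : M) 1 s) := by
      intro b
      show ((g2 : M) * (b : M)) 0 q * (starRingEnd ℂ) (((g2 : M) * (b : M)) 0 s) = _
      simp [g2, Matrix.mul_apply, Fin.sum_univ_two]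
    simp only [hpt] at hk
    exact hk
  have hsum : ∀ q s : Fin 2,
      (∫ b, (b : M) 0 q * (starRingEnd ℂ) ((b : M) 0 s) ∂μ)
        + (∫ b, (b : M) 1 q * (starRingEnd ℂ) ((b : M) 1 s) ∂μ)
      = if q = s then 1 else 0 := by
    intro q s
    rw [← integral_add (int_pair μ 0 q 0 s) (int_pair μ 1 q 1 s)]
    have hpt : ∀ b : G, (b : M) 0 q * (starRingEnd ℂ) ((b : M) 0 s)
        + (b : M) 1 q * (starRingEnd ℂ) ((b : M) 1 s) = if q = s then 1 else 0 := by
      intro b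
      have h := congrFun (congrFun (star_mul_self' b) s) q
      rw [Matrix.mul_apply] at h
      simp only [Fin.sum_univ_two, Matrix.star_apply, Complex.star_def, Matrix.one_apply] at h
      by_cases hqs : q = s
      · subst hqs; simp at h ⊢; linear_combination h
      · simp [hqs, Ne.symm hqs] at h ⊢; linear_combination h
    simp only [hpt]
    rw [integral_const]
    simp
  have hp : p = 0 ∨ p = 1 := by omega
  have hr : r = 0 ∨ r = 1 := by omega
  rcases hp with rfl | rfl <;> rcases hr with rfl | rfl
  · have h := hsum q s
    rw [heq q s] at h
    rw [if_pos rfl, one_mul]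
    linear_combination (1/2 : ℂ) * h
  · rw [h01 q s]
    norm_num
  · rw [h10 q s]
    norm_num
  · have h := hsum q s
    rw [heq q s] at h
    rw [if_pos rfl, one_mul, heq q s]
    linear_combination (1/2 : ℂ) * h

/-- The inner integral. -/
lemma hinner (μ : Measure G) [IsProbabilityMeasure μ]
    (hinv : ∀ (g : G) (s : Set G), MeasurableSet s → μ ((fun u => g * u) ⁻¹' s) = μ s)
    (a : G) :
    ∫ b, Matrix.trace ((a : M) * (b : M)) * Matrix.trace ((a : M) * ((b : M))⁻¹) ∂μ
      = ((a : M) 0 0 * (a : M) 0 0 + (a : M) 0 1 * (a : M) 1 0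
          + (a : M) 1 0 * (a : M) 0 1 + (a : M) 1 1 * (a : M) 1 1) / 2 := by
  have hexp : ∀ b : G, Matrix.trace ((a : M) * (b : M)) * Matrix.trace ((a : M) * ((b : M))⁻¹)
      = ∑ x : (Fin 2 × Fin 2) × Fin 2 × Fin 2,
          ((a : M) x.1.1 x.1.2 * (a : M) x.2.1 x.2.2)
            * ((b : M) x.1.2 x.1.1 * (starRingEnd ℂ) ((b : M) x.2.1 x.2.2)) := by
    intro b
    rw [inv_coe b]
    simp only [Fintype.sum_prod_type, Matrix.trace_fin_two, Matrix.mul_apply, Fin.sum_univ_two,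
      Matrix.star_apply, Complex.star_def]
    ring
  simp only [hexp]
  rw [integral_finset_sum _ (fun x _ => ((int_pair μ x.1.2 x.1.1 x.2.1 x.2.2).const_mul _))]
  simp only [integral_const_mul, hD μ hinv]
  simp only [Fintype.sum_prod_type, Fin.sum_univ_two]
  norm_num
  all_goals ring

end SU2Aux

/-- Sieber–Richter spin contribution: the double Haar average over `SU(2)` of
`tr(ab)·tr(ab⁻¹)` equals `-1/2`. -/
theorem su2_haar_double_average_trace
    (μ : Measure ↥(Matrix.specialUnitaryGroup (Fin 2) ℂ))
    [IsProbabilityMeasure μ]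
    (hinv : ∀ (g : ↥(Matrix.specialUnitaryGroup (Fin 2) ℂ)) (s : Set ↥(Matrix.specialUnitaryGroup (Fin 2) ℂ)),
      MeasurableSet s → μ ((fun u => g * u) ⁻¹' s) = μ s) :
    ∫ a, ∫ b, Matrix.trace ((a : Matrix (Fin 2) (Fin 2) ℂ) * (b : Matrix (Fin 2) (Fin 2) ℂ)) *
        Matrix.trace ((a : Matrix (Fin 2) (Fin 2) ℂ) * (b : Matrix (Fin 2) (Fin 2) ℂ)⁻¹) ∂μ ∂μ
      = -(1/2 : ℂ) := by
  classical
  have hz0 : ∀ q s : Fin 2, ∫ a : SU2Aux.G, (a : SU2Aux.M) 0 q * (a : SU2Aux.M) 0 s ∂μ = 0 := by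
    intro q s
    have hk := SU2Aux.key μ hinv SU2Aux.g1 (fun u => (u : SU2Aux.M) 0 q * (u : SU2Aux.M) 0 s)
    have hpt : ∀ b : SU2Aux.G, ((SU2Aux.g1 * b : SU2Aux.G) : SU2Aux.M) 0 q
          * ((SU2Aux.g1 * b : SU2Aux.G) : SU2Aux.M) 0 s
        = -((b : SU2Aux.M) 0 q * (b : SU2Aux.M) 0 s) := by
      intro b
      show ((SU2Aux.g1 : SU2Aux.M) * (b : SU2Aux.M)) 0 q
          * (((SU2Aux.g1 : SU2Aux.M) * (b : SU2Aux.M)) 0 s) = _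
      simp [SU2Aux.g1, Matrix.mul_apply, Fin.sum_univ_two]
      ring_nf
      all_goals simp [Complex.I_sq]
      all_goals ring
    simp only [hpt, integral_neg] at hk
    linear_combination (-1/2 : ℂ) * hk
  have hz1 : ∀ q s : Fin 2, ∫ a : SU2Aux.G, (a : SU2Aux.M) 1 q * (a : SU2Aux.M) 1 s ∂μ = 0 := by
    intro q s
    have hk := SU2Aux.key μ hinv SU2Aux.g1 (fun u => (u : SU2Aux.M) 1 q * (u : SU2Aux.M) 1 s)
    have hpt : ∀ b : SU2Aux.G, ((SU2Aux.g1 * b : SU2Aux.G) : SU2Aux.M) 1 q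
          * ((SU2Aux.g1 * b : SU2Aux.G) : SU2Aux.M) 1 s
        = -((b : SU2Aux.M) 1 q * (b : SU2Aux.M) 1 s) := by
      intro b
      show ((SU2Aux.g1 : SU2Aux.M) * (b : SU2Aux.M)) 1 q
          * (((SU2Aux.g1 : SU2Aux.M) * (b : SU2Aux.M)) 1 s) = _
      simp [SU2Aux.g1, Matrix.mul_apply, Fin.sum_univ_two]
      ring_nf
      all_goals simp [Complex.I_sq]
      all_goals ring
    simp only [hpt, integral_neg] at hk
    linear_combination (-1/2 : ℂ) * hk
  have hanti : ∫ a : SU2Aux.G, (a : SU2Aux.M) 0 0 * (a : SU2Aux.M) 1 1 ∂μ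
      = -∫ a : SU2Aux.G, (a : SU2Aux.M) 1 0 * (a : SU2Aux.M) 0 1 ∂μ := by
    have hk := SU2Aux.key μ hinv SU2Aux.g2 (fun u => (u : SU2Aux.M) 0 0 * (u : SU2Aux.M) 1 1)
    have hpt : ∀ b : SU2Aux.G, ((SU2Aux.g2 * b : SU2Aux.G) : SU2Aux.M) 0 0
          * ((SU2Aux.g2 * b : SU2Aux.G) : SU2Aux.M) 1 1
        = -((b : SU2Aux.M) 1 0 * (b : SU2Aux.M) 0 1) := by
      intro b
      show ((SU2Aux.g2 : SU2Aux.M) * (b : SU2Aux.M)) 0 0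
          * (((SU2Aux.g2 : SU2Aux.M) * (b : SU2Aux.M)) 1 1) = _
      simp [SU2Aux.g2, Matrix.mul_apply, Fin.sum_univ_two]
      all_goals ring
    simp only [hpt, integral_neg] at hk
    linear_combination -hk
  have hswap : ∫ a : SU2Aux.G, (a : SU2Aux.M) 0 1 * (a : SU2Aux.M) 1 0 ∂μ
      = ∫ a : SU2Aux.G, (a : SU2Aux.M) 1 0 * (a : SU2Aux.M) 0 1 ∂μ := by
    have h4 : (fun a : SU2Aux.G => (a : SU2Aux.M) 0 1 * (a : SU2Aux.M) 1 0)
        = fun a : SU2Aux.G => (a : SU2Aux.M) 1 0 * (a : SU2Aux.M) 0 1 := by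
      funext a; ring
    rw [h4]
  have hdet : (∫ a : SU2Aux.G, (a : SU2Aux.M) 0 0 * (a : SU2Aux.M) 1 1 ∂μ)
      - (∫ a : SU2Aux.G, (a : SU2Aux.M) 0 1 * (a : SU2Aux.M) 1 0 ∂μ) = 1 := by
    rw [← integral_sub (SU2Aux.int_pair2 μ 0 0 1 1) (SU2Aux.int_pair2 μ 0 1 1 0)]
    have hpt : ∀ a : SU2Aux.G,
        (a : SU2Aux.M) 0 0 * (a : SU2Aux.M) 1 1 - (a : SU2Aux.M) 0 1 * (a : SU2Aux.M) 1 0 = 1 := by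
      intro a
      rw [← Matrix.det_fin_two]
      exact SU2Aux.det_coe a
    simp only [hpt]
    simp
  have hval : ∫ a : SU2Aux.G, (a : SU2Aux.M) 0 1 * (a : SU2Aux.M) 1 0 ∂μ = -(1/2 : ℂ) := by
    rw [hswap] at hdet ⊢
    linear_combination (1/2 : ℂ) * hanti + (-(1/2) : ℂ) * hdet
  have hval' : ∫ a : SU2Aux.G, (a : SU2Aux.M) 1 0 * (a : SU2Aux.M) 0 1 ∂μ = -(1/2 : ℂ) := by
    rw [← hswap]; exact hval
  simp only [SU2Aux.hinner μ hinv]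
  rw [MeasureTheory.integral_div]
  have I1 : Integrable (fun a : SU2Aux.G => (a : SU2Aux.M) 0 0 * (a : SU2Aux.M) 0 0) μ :=
    SU2Aux.int_pair2 μ 0 0 0 0
  have I2 : Integrable (fun a : SU2Aux.G => (a : SU2Aux.M) 0 1 * (a : SU2Aux.M) 1 0) μ :=
    SU2Aux.int_pair2 μ 0 1 1 0
  have I3 : Integrable (fun a : SU2Aux.G => (a : SU2Aux.M) 1 0 * (a : SU2Aux.M) 0 1) μ :=
    SU2Aux.int_pair2 μ 1 0 0 1
  have I4 : Integrable (fun a : SU2Aux.G => (a : SU2Aux.M) 1 1 * (a : SU2Aux.M) 1 1) μ :=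
    SU2Aux.int_pair2 μ 1 1 1 1
  have I12 : Integrable (fun a : SU2Aux.G =>
      (a : SU2Aux.M) 0 0 * (a : SU2Aux.M) 0 0 + (a : SU2Aux.M) 0 1 * (a : SU2Aux.M) 1 0) μ :=
    I1.add I2
  have I123 : Integrable (fun a : SU2Aux.G =>
      (a : SU2Aux.M) 0 0 * (a : SU2Aux.M) 0 0 + (a : SU2Aux.M) 0 1 * (a : SU2Aux.M) 1 0
        + (a : SU2Aux.M) 1 0 * (a : SU2Aux.M) 0 1) μ := I12.add I3
  rw [integral_add I123 I4, integral_add I12 I3, integral_add I1 I2]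
  rw [hz0 0 0, hz1 1 1, hval, hval']
  norm_num
end

section
/- Let U = diag(u₁, ..., u_d) be a block-diagonal 2d×2d matrix with each uⱼ ∈ SU(2), and let X be a symmetric unitary d×d matrix. Then T = U⁻¹ (X ⊗ I₂) U is unitary and satisfies Tᵀ = -(I_d ⊗ J) T (I_d ⊗ J), where J = [[0, 1], [-1, 0]]. -/
open Matrix
open scoped Kronecker

/-!
Each `uⱼ ∈ SU(2)` satisfies `uⱼᵀ J uⱼ = (det uⱼ) J = J`, so the block-diagonal `U` satisfies
`Uᵀ K U = K` for `K = I_d ⊗ J`, i.e. `Uᵀ = K U⁻¹ K⁻¹`. As `X ⊗ I₂` is symmetric and commutes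
with `K`, transposing `T = U⁻¹ (X ⊗ I₂) U` gives `Tᵀ = K T K⁻¹`, and `K⁻¹ = -K` since `J² = -1`.
-/

namespace Matrix

theorem transpose_mul_mul_self_eq_det_smul_fin_two {R : Type*} [CommRing R]
    (v : Matrix (Fin 2) (Fin 2) R) :
    vᵀ * !![0, 1; -1, 0] * v = v.det • !![0, 1; -1, 0] := by
  ext i j
  fin_cases i <;> fin_cases j <;>
    simp [mul_apply, Fin.sum_univ_two, det_fin_two] <;> ring

theorem kronecker_neg {α l m n p : Type*} [Mul α] [HasDistribNeg α]
    (A : Matrix l m α) (B : Matrix n p α) : A ⊗ₖ (-B) = -(A ⊗ₖ B) := by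
  ext
  simp

theorem commute_kronecker_one_one_kronecker {R m n : Type*} [CommSemiring R]
    [Fintype m] [DecidableEq m] [Fintype n] [DecidableEq n]
    (A : Matrix m m R) (B : Matrix n n R) :
    Commute (A ⊗ₖ (1 : Matrix n n R)) ((1 : Matrix m m R) ⊗ₖ B) := by
  rw [Commute, SemiconjBy, ← mul_kronecker_mul, ← mul_kronecker_mul]
  simp

theorem blockDiagonal_transpose_mul_mul_self {R m o : Type*} [CommSemiring R]
    [Fintype m] [Fintype o] [DecidableEq o] (M : o → Matrix m m R) (S : Matrix m m R) :
    (blockDiagonal M)ᵀ * blockDiagonal (fun _ => S) * blockDiagonal M =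
      blockDiagonal fun k => (M k)ᵀ * S * M k := by
  rw [blockDiagonal_transpose, ← blockDiagonal_mul, ← blockDiagonal_mul]

section Unitary

variable {R m : Type*} [CommRing R] [StarRing R] [Fintype m] [DecidableEq m]

theorem blockDiagonal_mem_unitaryGroup {o : Type*} [Fintype o] [DecidableEq o]
    {M : o → Matrix m m R} (hM : ∀ k, M k ∈ unitaryGroup m R) :
    blockDiagonal M ∈ unitaryGroup (m × o) R := by
  rw [mem_unitaryGroup_iff, star_eq_conjTranspose, blockDiagonal_conjTranspose,
    ← blockDiagonal_mul]
  simp_rw [← star_eq_conjTranspose, fun k => mem_unitaryGroup_iff.mp (hM k)]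
  exact blockDiagonal_one

theorem reindex_mem_unitaryGroup {n : Type*} [Fintype n] [DecidableEq n] (e : m ≃ n)
    {A : Matrix m m R} (hA : A ∈ unitaryGroup m R) : reindex e e A ∈ unitaryGroup n R := by
  rw [mem_unitaryGroup_iff, star_eq_conjTranspose, conjTranspose_reindex, reindex_apply,
    reindex_apply, submatrix_mul_equiv, ← star_eq_conjTranspose, mem_unitaryGroup_iff.mp hA,
    submatrix_one_equiv]

end Unitary

theorem transpose_inv_mul_mul_of_transpose_mul_mul_self {R n : Type*} [CommRing R]
    [Fintype n] [DecidableEq n] {U K A : Matrix n n R} (hU : IsUnit U.det) (hK : IsUnit K.det)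
    (hUK : Uᵀ * K * U = K) (hA : Aᵀ = A) (hAK : Commute A K) :
    (U⁻¹ * A * U)ᵀ = K * (U⁻¹ * A * U) * K⁻¹ := by
  have hUt : Uᵀ = K * U⁻¹ * K⁻¹ := by
    calc Uᵀ = Uᵀ * K * U * U⁻¹ * K⁻¹ := by
          simp [Matrix.mul_assoc, mul_nonsing_inv _ hU, mul_nonsing_inv _ hK]
      _ = K * U⁻¹ * K⁻¹ := by rw [hUK]
  have hUt_inv : (Uᵀ)⁻¹ = K * U * K⁻¹ :=
    inv_eq_right_inv <| by rw [← Matrix.mul_assoc, ← Matrix.mul_assoc, hUK, mul_nonsing_inv _ hK]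
  have hKAK : K⁻¹ * A * K = A := by
    rw [Matrix.mul_assoc, hAK.eq, ← Matrix.mul_assoc, nonsing_inv_mul _ hK, Matrix.one_mul]
  rw [transpose_mul, transpose_mul, transpose_nonsing_inv, hA, hUt_inv, hUt]
  simp only [Matrix.mul_assoc]
  rw [← Matrix.mul_assoc K⁻¹ A, ← Matrix.mul_assoc (K⁻¹ * A), hKAK]

end Matrix

/-- Time-reversal symmetric transition matrices for the massless Dirac operator:
with `U = diag(u₁,…,u_d)` block diagonal, `uⱼ ∈ SU(2)`, and `X` symmetric unitary,
`T = U⁻¹ (X ⊗ I₂) U` is unitary and satisfies `Tᵀ = -(I_d ⊗ J) T (I_d ⊗ J)`. -/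
theorem time_reversal_transition_matrix (d : ℕ)
    (u : Fin d → Matrix (Fin 2) (Fin 2) ℂ)
    (hu : ∀ j, u j ∈ Matrix.specialUnitaryGroup (Fin 2) ℂ)
    (X : Matrix (Fin d) (Fin d) ℂ)
    (hXsymm : Xᵀ = X) (hXunit : X ∈ Matrix.unitaryGroup (Fin d) ℂ)
    (U : Matrix (Fin d × Fin 2) (Fin d × Fin 2) ℂ)
    (hU : ∀ p q : Fin d × Fin 2, U p q = if p.1 = q.1 then u p.1 p.2 q.2 else 0)
    (J : Matrix (Fin 2) (Fin 2) ℂ) (hJ : J = !![0, 1; -1, 0])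
    (T : Matrix (Fin d × Fin 2) (Fin d × Fin 2) ℂ)
    (hT : T = U⁻¹ * (X ⊗ₖ (1 : Matrix (Fin 2) (Fin 2) ℂ)) * U) :
    T ∈ Matrix.unitaryGroup (Fin d × Fin 2) ℂ ∧
      Tᵀ = -(((1 : Matrix (Fin d) (Fin d) ℂ) ⊗ₖ J) * T *
        ((1 : Matrix (Fin d) (Fin d) ℂ) ⊗ₖ J)) := by
  set K := (1 : Matrix (Fin d) (Fin d) ℂ) ⊗ₖ J
  set A := X ⊗ₖ (1 : Matrix (Fin 2) (Fin 2) ℂ)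
  -- Mathlib's `blockDiagonal` indexes the blocks by the second coordinate.
  have hU_blockDiagonal : U = reindex (.prodComm _ _) (.prodComm _ _) (blockDiagonal u) := by
    ext p q
    simp [hU, blockDiagonal_apply]
  have hU_unitary : U ∈ unitaryGroup _ ℂ := hU_blockDiagonal ▸ reindex_mem_unitaryGroup _
    (blockDiagonal_mem_unitaryGroup fun j => (mem_specialUnitaryGroup_iff.mp (hu j)).1)
  have huJ : ∀ j, (u j)ᵀ * J * u j = J := fun j => by
    rw [hJ, transpose_mul_mul_self_eq_det_smul_fin_two,
      (mem_specialUnitaryGroup_iff.mp (hu j)).2, one_smul]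
  have hUK : Uᵀ * K * U = K := by
    rw [hU_blockDiagonal, show K = _ from one_kronecker J, transpose_reindex]
    simp only [reindex_apply, submatrix_mul_equiv, blockDiagonal_transpose_mul_mul_self, huJ]
  have hK_mul_neg : K * (-K) = 1 := by
    have hJJ : J * -J = 1 := by rw [hJ]; ext i j; fin_cases i <;> fin_cases j <;> simp
    rw [← kronecker_neg, ← mul_kronecker_mul, one_mul, hJJ, one_kronecker_one]
  have hA_unitary : A ∈ unitaryGroup _ ℂ := kronecker_mem_unitary hXunit (one_mem _)
  have hA_symm : Aᵀ = A := by rw [← kroneckerMap_transpose, hXsymm, transpose_one]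
  have hU_inv : U⁻¹ = star U := inv_eq_left_inv (mem_unitaryGroup_iff'.mp hU_unitary)
  refine ⟨hT ▸ hU_inv ▸ mul_mem (mul_mem (Unitary.star_mem hU_unitary) hA_unitary) hU_unitary, ?_⟩
  rw [hT, transpose_inv_mul_mul_of_transpose_mul_mul_self
    (isUnit_det_of_left_inverse (mem_unitaryGroup_iff'.mp hU_unitary))
    (isUnit_det_of_right_inverse hK_mul_neg) hUK hA_symm (commute_kronecker_one_one_kronecker X J),
    inv_eq_right_inv hK_mul_neg, mul_neg]
end
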